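/- Let G be a group which has no TP₂-pattern for cosets of centralizers. Then for every subgroup H of G there exists n ∈ ℕ such that there is no H-witness sequence of width n in G. -/

import Mathlib

open scoped Pointwise

/-- The center of a subgroup `H` of `G`, viewed as a subgroup of `G`:
`Z(H) = H ⊓ C_G(H)`. -/
def subgroupCenter {G : Type*} [Group G] (H : Subgroup G) : Subgroup G :=
  H ⊓ Subgroup.centralizer (H : Set G)

/-- `E_l`: the subgroup of `G` generated by `H ∪ {a_{k,j}, b_k : k < l, j < n}`. -/
def witnessEnv {G : Type*} [Group G] (H : Subgroup G) {n : ℕ}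
    (a : ℕ → Fin n → G) (b : ℕ → G) (l : ℕ) : Subgroup G :=
  Subgroup.closure ((H : Set G) ∪ {x | ∃ k < l, (∃ j : Fin n, x = a k j) ∨ x = b k})

/-- `(a, b)` is an `H`-witness sequence of width `n` in `G`. -/
def IsHWitnessSeq {G : Type*} [Group G] (H : Subgroup G) (n : ℕ)
    (a : ℕ → Fin n → G) (b : ℕ → G) : Prop :=
  ∀ l : ℕ,
    (∀ i : Fin n, ∀ g ∈ witnessEnv H a b l,
        subgroupCenter H ≤ Subgroup.centralizer {g} →
        a l i ∈ Subgroup.centralizer {g}) ∧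
    (∀ g ∈ witnessEnv H a b l,
        H ≤ Subgroup.centralizer {g} → b l ∈ Subgroup.centralizer {g}) ∧
    (∀ i j : Fin n, i < j → (a l i)⁻¹ * a l j ∉ Subgroup.centralizer {b l})

/-- `G` admits a TP₂-pattern for cosets of centralizers, of width `n`. -/
def HasCosetTP2Pattern (G : Type*) [Group G] (n : ℕ) : Prop :=
  ∃ (a : ℕ → Fin n → G) (b : ℕ → G),
    (∀ l : ℕ, ∀ i j : Fin n, i ≠ j →
      Disjoint (a l i • (Subgroup.centralizer {b l} : Set G))
               (a l j • (Subgroup.centralizer {b l} : Set G))) ∧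
    (∀ m : ℕ, ∀ f : ℕ → Fin n, ∃ x : G, ∀ l ≤ m,
      x ∈ a l (f l) • (Subgroup.centralizer {b l} : Set G))

/-- `G` has no TP₂-pattern for cosets of centralizers. -/
def NoCosetTP2Pattern (G : Type*) [Group G] : Prop :=
  ∃ n : ℕ, ¬ HasCosetTP2Pattern G n

/-!
A witness sequence is itself a TP₂-pattern, with the same elements. The closure conditions force
every `a_{l,i}` to centralize `H` and every `b_l` to centralize `Z(H)`; feeding these back in,
elements from different rows commute (`a_{k,i}` with `a_{l,j}` and with `b_l`). So the coset
`a_{l,f(l)} C(b_l)` contains the product `a_{0,f(0)} ⋯ a_{m,f(m)}` for every `l ≤ m`, while the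
rows are disjoint because `a_{l,i}⁻¹ a_{l,j} ∉ C(b_l)`.
-/

open Subgroup

section

variable {G : Type*} [Group G]

namespace Subgroup

lemma mem_centralizer_singleton_comm {x y : G} : x ∈ centralizer {y} ↔ y ∈ centralizer {x} := by
  simp only [mem_centralizer_singleton_iff, eq_comm]

lemma le_centralizer_singleton_iff {K : Subgroup G} {g : G} :
    K ≤ centralizer {g} ↔ g ∈ centralizer (K : Set G) :=
  forall₂_congr fun _ _ => mem_centralizer_singleton_iff

lemma disjoint_leftCoset_of_inv_mul_notMem {K : Subgroup G} {x y : G} (h : x⁻¹ * y ∉ K) :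
    Disjoint (x • (K : Set G)) (y • (K : Set G)) := by
  refine Set.disjoint_left.2 fun z hzx hzy => h ?_
  rw [mem_leftCoset_iff] at hzx hzy
  simpa [mul_assoc] using mul_mem hzx (inv_mem hzy)

end Subgroup

lemma subgroupCenter_le_centralizer_singleton {H : Subgroup G} {g : G} (hg : g ∈ H) :
    subgroupCenter H ≤ centralizer {g} :=
  fun _ hz => mem_centralizer_singleton_iff.2 (hz.2 g hg).symm

lemma subgroupCenter_le_centralizer_singleton_of_mem_centralizer {H : Subgroup G} {g : G}
    (hg : g ∈ centralizer (H : Set G)) : subgroupCenter H ≤ centralizer {g} :=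
  inf_le_left.trans (le_centralizer_singleton_iff.2 hg)

lemma list_prod_range_mem_leftCoset_centralizer {a b : ℕ → G}
    (haa : ∀ k l, k < l → Commute (a k) (a l))
    (hab : ∀ k l, k ≠ l → a k ∈ centralizer {b l}) (m : ℕ) :
    ∀ l < m, ((List.range m).map a).prod ∈ a l • (centralizer {b l} : Set G) := by
  induction m with
  | zero => simp
  | succ m ih =>
    have prod_mem_of_lt {s : Subgroup G} (hs : ∀ k < m, a k ∈ s) :
        ((List.range m).map a).prod ∈ s :=
      list_prod_mem (by simpa using hs)
    intro l hl
    rw [List.range_succ, List.map_append, List.prod_append, List.map_singleton,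
      List.prod_singleton]
    rcases Nat.lt_succ_iff_lt_or_eq.1 hl with hlm | rfl
    · rw [mem_leftCoset_iff, ← mul_assoc]
      exact mul_mem ((mem_leftCoset_iff _).1 (ih l hlm)) (hab m l hlm.ne')
    · have hcomm : ((List.range l).map a).prod * a l = a l * ((List.range l).map a).prod :=
        mem_centralizer_singleton_iff.1
          (prod_mem_of_lt fun k hk => mem_centralizer_singleton_iff.2 (haa k l hk))
      rw [hcomm]
      exact Set.smul_mem_smul_set (prod_mem_of_lt fun k hk => hab k l hk.ne)

theorem hasCosetTP2Pattern_of_commute {n : ℕ} (a : ℕ → Fin n → G) (b : ℕ → G)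
    (hrow : ∀ l, ∀ i j : Fin n, i < j → (a l i)⁻¹ * a l j ∉ centralizer {b l})
    (haa : ∀ k l, k < l → ∀ i j, Commute (a k i) (a l j))
    (hab : ∀ k l, k ≠ l → ∀ j, a k j ∈ centralizer {b l}) :
    HasCosetTP2Pattern G n := by
  refine ⟨a, b, fun l i j hij => ?_, fun m f => ⟨((List.range (m + 1)).map fun k => a k (f k)).prod,
    fun l hl => ?_⟩⟩
  · rcases hij.lt_or_gt with h | h
    · exact disjoint_leftCoset_of_inv_mul_notMem (hrow l i j h)
    · exact (disjoint_leftCoset_of_inv_mul_notMem (hrow l j i h)).symm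
  · exact list_prod_range_mem_leftCoset_centralizer (fun k l h => haa k l h _ _)
      (fun k l h => hab k l h _) (m + 1) l (Nat.lt_succ_of_le hl)

variable {H : Subgroup G} {n : ℕ} {a : ℕ → Fin n → G} {b : ℕ → G}

lemma le_witnessEnv (l : ℕ) : H ≤ witnessEnv H a b l :=
  fun _ hh => subset_closure (Or.inl hh)

lemma a_mem_witnessEnv {k l : ℕ} (hkl : k < l) (j : Fin n) : a k j ∈ witnessEnv H a b l :=
  subset_closure (Or.inr ⟨k, hkl, Or.inl ⟨j, rfl⟩⟩)

lemma b_mem_witnessEnv {k l : ℕ} (hkl : k < l) : b k ∈ witnessEnv H a b l :=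
  subset_closure (Or.inr ⟨k, hkl, Or.inr rfl⟩)

namespace IsHWitnessSeq

lemma a_mem_centralizer (hw : IsHWitnessSeq H n a b) (l : ℕ) (i : Fin n) :
    a l i ∈ centralizer (H : Set G) :=
  le_centralizer_singleton_iff.1 fun h hh => mem_centralizer_singleton_comm.1 <|
    (hw l).1 i h (le_witnessEnv l hh) (subgroupCenter_le_centralizer_singleton hh)

lemma subgroupCenter_le_centralizer_b (hw : IsHWitnessSeq H n a b) (l : ℕ) :
    subgroupCenter H ≤ centralizer {b l} := fun z hz =>
  mem_centralizer_singleton_comm.1 <|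
    (hw l).2.1 z (le_witnessEnv l hz.1) (le_centralizer_singleton_iff.2 hz.2)

lemma commute_a_of_lt (hw : IsHWitnessSeq H n a b) {k l : ℕ} (hkl : k < l) (i j : Fin n) :
    Commute (a k i) (a l j) :=
  (mem_centralizer_singleton_iff.1 <| (hw l).1 j (a k i) (a_mem_witnessEnv hkl i)
    (subgroupCenter_le_centralizer_singleton_of_mem_centralizer (hw.a_mem_centralizer k i))).symm

lemma a_mem_centralizer_b_of_ne (hw : IsHWitnessSeq H n a b) {k l : ℕ} (hkl : k ≠ l)
    (j : Fin n) : a k j ∈ centralizer {b l} := by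
  rcases hkl.lt_or_gt with hkl | hlk
  · exact mem_centralizer_singleton_comm.1 <| (hw l).2.1 (a k j) (a_mem_witnessEnv hkl j)
      (le_centralizer_singleton_iff.2 (hw.a_mem_centralizer k j))
  · exact (hw k).1 j (b l) (b_mem_witnessEnv hlk) (hw.subgroupCenter_le_centralizer_b l)

theorem hasCosetTP2Pattern (hw : IsHWitnessSeq H n a b) : HasCosetTP2Pattern G n :=
  hasCosetTP2Pattern_of_commute a b (fun l => (hw l).2.2) (fun _ _ hkl => hw.commute_a_of_lt hkl)
    (fun _ _ hkl => hw.a_mem_centralizer_b_of_ne hkl)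

end IsHWitnessSeq

end

theorem no_witness_seq_of_ntp2 {G : Type*} [Group G]
    (hG : NoCosetTP2Pattern G) (H : Subgroup G) :
    ∃ n : ℕ, ¬ ∃ (a : ℕ → Fin n → G) (b : ℕ → G), IsHWitnessSeq H n a b := by
  obtain ⟨n, hn⟩ := hG
  exact ⟨n, fun ⟨_, _, hw⟩ => hn hw.hasCosetTP2Pattern⟩
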